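/- arXiv:0911.1023 — 5 statements merged into one kernel-verified Lean document; each statement's English description precedes it below -/
import Mathlib

section
/- If X is a topological space that admits an unbounded continuous real-valued function (i.e., X is not pseudocompact) and X has a π-base consisting of clopen sets, then X can be written as the disjoint union of infinitely many nonempty clopen subsets. -/
/-!
An unbounded continuous `f` yields points `xₙ` whose values `|f xₙ|` tend to infinity and are
`2`-separated, so the preimages of the unit balls around these values form a locally finite
family of pairwise disjoint nonempty open sets. Shrinking each to a member of the clopen π-base
keeps all three properties; the union of a locally finite family of clopen sets is clopen, so
its complement can be absorbed into one of the pieces.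
-/

open Set

/-- `X` is pseudocompact: every continuous real-valued function is bounded. -/
def Pseudocompact (X : Type*) [TopologicalSpace X] : Prop :=
  ∀ f : X → ℝ, Continuous f → ∃ M : ℝ, ∀ x : X, |f x| ≤ M

/-- `B` is a π-base for `X`: a collection of nonempty open sets such that every
nonempty open set contains a member of `B`. -/
def IsPiBase {X : Type*} [TopologicalSpace X] (B : Set (Set X)) : Prop :=
  (∀ V ∈ B, IsOpen V ∧ V.Nonempty) ∧
    ∀ U : Set X, IsOpen U → U.Nonempty → ∃ V ∈ B, V ⊆ U

open Filter Metric Function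

theorem exists_clopen_partition_of_locallyFinite {X ι : Type*} [TopologicalSpace X]
    [DecidableEq ι] {D : ι → Set X}
    (hD : ∀ i, IsClopen (D i) ∧ (D i).Nonempty) (hdisj : Pairwise (Disjoint on D))
    (hlf : LocallyFinite D) (i₀ : ι) :
    ∃ C : ι → Set X, (∀ i, IsClopen (C i) ∧ (C i).Nonempty) ∧
      Pairwise (Disjoint on C) ∧ ⋃ i, C i = univ := by
  set R := (⋃ i, D i)ᶜ
  have hR : IsClopen R :=
    ⟨(isOpen_iUnion fun i => (hD i).1.isOpen).isClosed_compl,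
      (hlf.isClosed_iUnion fun i => (hD i).1.isClosed).isOpen_compl⟩
  have hRD : ∀ i, Disjoint R (D i) := fun i =>
    disjoint_compl_left_iff_subset.2 (subset_iUnion D i)
  set C := update D i₀ (D i₀ ∪ R)
  have hDC : ∀ i, D i ⊆ C i := by
    intro i
    rcases eq_or_ne i i₀ with rfl | hi
    · simp only [C, update_self, subset_union_left]
    · simp only [C, update_of_ne hi, subset_rfl]
  refine ⟨C, fun i => ⟨?_, (hD i).2.mono (hDC i)⟩, fun i j hij => ?_, ?_⟩
  · rcases eq_or_ne i i₀ with rfl | hi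
    · simpa only [C, update_self] using (hD i).1.union hR
    · simpa only [C, update_of_ne hi] using (hD i).1
  · rcases eq_or_ne i i₀ with rfl | hi
    · simpa only [onFun, C, update_self, update_of_ne hij.symm] using
        (hdisj hij).union_left (hRD j)
    rcases eq_or_ne j i₀ with rfl | hj
    · simpa only [onFun, C, update_self, update_of_ne hij] using
        ((hdisj hij.symm).union_left (hRD i)).symm
    · simpa only [onFun, C, update_of_ne hi, update_of_ne hj] using hdisj hij
  · refine eq_univ_of_forall fun x => ?_
    by_cases hx : x ∈ ⋃ i, D i
    · obtain ⟨j, hj⟩ := mem_iUnion.1 hx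
      exact mem_iUnion.2 ⟨j, hDC j hj⟩
    · exact mem_iUnion.2 ⟨i₀, by simp only [C, update_self]; exact Or.inr hx⟩

theorem exists_seq_tendsto_atTop_of_forall_exists_lt {X : Type*} {g : X → ℝ}
    (hg : ∀ M, ∃ x, M < g x) {δ : ℝ} (hδ : 0 ≤ δ) :
    ∃ x : ℕ → X, Tendsto (g ∘ x) atTop atTop ∧ ∀ ⦃m n⦄, m < n → g (x m) + δ < g (x n) := by
  choose φ hφ using hg
  let x : ℕ → X := fun n => Nat.rec (φ 0) (fun k y => φ (max (g y + δ) (k + 1))) n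
  have hsucc : ∀ n : ℕ, max (g (x n) + δ) (n + 1) < g (x (n + 1)) := fun n => hφ _
  have hgt : ∀ n : ℕ, (n : ℝ) < g (x n) := by
    rintro (_ | n)
    · exact_mod_cast hφ 0
    · exact_mod_cast (le_max_right _ _).trans_lt (hsucc n)
  have hstep : ∀ n, g (x n) + δ < g (x (n + 1)) := fun n =>
    (le_max_left _ _).trans_lt (hsucc n)
  have hmono : StrictMono (g ∘ x) :=
    strictMono_nat_of_lt_succ fun n => (le_add_of_nonneg_right hδ).trans_lt (hstep n)
  refine ⟨x, tendsto_atTop_mono (fun n => (hgt n).le) tendsto_natCast_atTop_atTop,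
    fun m n hmn => (hstep m).trans_le (hmono.monotone hmn)⟩

theorem locallyFinite_ball_of_tendsto_cocompact {ι E : Type*} [PseudoMetricSpace E]
    [ProperSpace E] {a : ι → E} (ha : Tendsto a cofinite (cocompact E)) (r : ℝ) :
    LocallyFinite fun i => ball (a i) r := by
  intro y
  refine ⟨ball y 1, ball_mem_nhds y one_pos, ?_⟩
  have hfar := ha (isCompact_closedBall y (r + 1)).compl_mem_cocompact
  refine (mem_cofinite.1 hfar).subset fun i ⟨z, hzi, hzy⟩ => ?_
  simp only [mem_ball] at hzi hzy
  simp only [mem_compl_iff, mem_preimage, mem_closedBall, not_not]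
  linarith [dist_triangle (a i) z y, dist_comm z (a i)]

theorem exists_open_pairwiseDisjoint_locallyFinite_of_not_pseudocompact
    {X : Type*} [TopologicalSpace X] (hX : ¬ Pseudocompact X) :
    ∃ U : ℕ → Set X, (∀ n, IsOpen (U n) ∧ (U n).Nonempty) ∧
      Pairwise (Disjoint on U) ∧ LocallyFinite U := by
  simp only [Pseudocompact, not_forall, not_exists, not_le] at hX
  obtain ⟨f, hf, hunb⟩ := hX
  obtain ⟨x, htends, hsep⟩ := exists_seq_tendsto_atTop_of_forall_exists_lt hunb zero_le_two
  set g := fun y => |f y|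
  have hg : Continuous g := hf.abs
  refine ⟨fun n => g ⁻¹' ball (g (x n)) 1,
    fun n => ⟨isOpen_ball.preimage hg, x n, mem_ball_self one_pos⟩, ?_, ?_⟩
  · refine (pairwise_disjoint_on _).2 fun m n hmn => (ball_disjoint_ball ?_).preimage g
    rw [Real.dist_eq]
    linarith [neg_abs_le (g (x m) - g (x n)), hsep hmn]
  · have ha : Tendsto (g ∘ x) cofinite (cocompact ℝ) := by
      rw [Nat.cofinite_eq_atTop, cocompact_eq_atBot_atTop]
      exact htends.mono_right le_sup_right
    exact (locallyFinite_ball_of_tendsto_cocompact ha 1).preimage_continuous hg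

theorem stmt0_general {X : Type*} [TopologicalSpace X]
    (hnp : ¬ Pseudocompact X)
    (B : Set (Set X)) (hB : IsPiBase B) (hBclopen : ∀ V ∈ B, IsClopen V) :
    ∃ C : ℕ → Set X, (∀ n, IsClopen (C n) ∧ (C n).Nonempty) ∧
      Pairwise (Function.onFun Disjoint C) ∧ (⋃ n, C n) = univ := by
  obtain ⟨U, hU, hdisj, hlf⟩ :=
    exists_open_pairwiseDisjoint_locallyFinite_of_not_pseudocompact hnp
  choose D hDB hDU using fun n => hB.2 (U n) (hU n).1 (hU n).2
  exact exists_clopen_partition_of_locallyFinite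
    (fun n => ⟨hBclopen _ (hDB n), (hB.1 _ (hDB n)).2⟩)
    (pairwise_disjoint_mono hdisj hDU) (hlf.subset hDU) 0

/-- If `X` is Tychonoff, not pseudocompact, and has a π-base of clopen sets, then `X` is
the disjoint union of infinitely many nonempty clopen subsets. -/
theorem stmt0 {X : Type*} [TopologicalSpace X] [T35Space X]
    (hnp : ¬ Pseudocompact X)
    (B : Set (Set X)) (hB : IsPiBase B) (hBclopen : ∀ V ∈ B, IsClopen V) :
    ∃ C : ℕ → Set X, (∀ n, IsClopen (C n) ∧ (C n).Nonempty) ∧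
      Pairwise (Function.onFun Disjoint C) ∧ (⋃ n, C n) = univ :=
  stmt0_general hnp B hB hBclopen
end

section
/- If C is a clopen subset of a product space X × Y that can be written as a finite union of rectangles (sets of the form A × B), then C can be written as a finite union of pairwise disjoint clopen rectangles (sets U × V with U clopen in X and V clopen in Y). -/
/-!
Partition `X` according to the vertical cross-section `C_x`. Since `C` is a finite union of
rectangles there are only finitely many distinct cross-sections, vertical and horizontal.
Whether `C_x = C_x'` depends only on which of the finitely many clopen horizontal
cross-sections contain `x` and `x'`, so `x ↦ C_x` is locally constant and its fibres are
clopen. Then `C` is the disjoint union of the clopen rectangles `{x | C_x = E} × E`.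
-/

open Set

section CrossSections

variable {X Y ι : Type*}

theorem finite_range_setOf_mem_iUnion_prod [Finite ι] (A : ι → Set X) (B : ι → Set Y) :
    (range fun x => {y | (x, y) ∈ ⋃ i, A i ×ˢ B i}).Finite := by
  refine (finite_range fun I : Set ι => ⋃ i ∈ I, B i).subset ?_
  rintro _ ⟨x, rfl⟩
  exact ⟨{i | x ∈ A i}, by ext y; simp⟩

theorem finite_range_setOf_mem_iUnion_prod' [Finite ι] (A : ι → Set X) (B : ι → Set Y) :
    (range fun y => {x | (x, y) ∈ ⋃ i, A i ×ˢ B i}).Finite := by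
  refine (finite_range fun I : Set ι => ⋃ i ∈ I, A i).subset ?_
  rintro _ ⟨y, rfl⟩
  exact ⟨{i | y ∈ B i}, by ext x; simp [and_comm]⟩

theorem isLocallyConstant_setOf_mem_of_finite_range [TopologicalSpace X] {s : Y → Set X}
    (hs : ∀ y, IsClopen (s y)) (hfin : (range s).Finite) :
    IsLocallyConstant fun x => {y | x ∈ s y} := by
  refine (IsLocallyConstant.iff_exists_open _).2 fun x => ?_
  refine ⟨⋂ t ∈ range s, {x' | x' ∈ t ↔ x ∈ t}, ?_, by simp, ?_⟩
  · refine hfin.isOpen_biInter ?_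
    rintro _ ⟨y, rfl⟩
    by_cases hx : x ∈ s y
    · simpa [hx] using (hs y).isOpen
    · simp only [hx, iff_false]
      exact (hs y).compl.isOpen
  · intro x' hx'
    ext y
    exact mem_iInter₂.1 hx' (s y) (mem_range_self y)

theorem setOf_mem_eq_iUnion_fiber_prod {f : X → Set Y} {e : ι → Set Y} (he : range f ⊆ range e) :
    {p : X × Y | p.2 ∈ f p.1} = ⋃ j, (f ⁻¹' {e j}) ×ˢ e j := by
  ext ⟨x, y⟩
  obtain ⟨j, hj⟩ := he (mem_range_self x)
  simp only [mem_ofPred_eq, mem_iUnion, mem_prod, mem_preimage, mem_singleton_iff]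
  exact ⟨fun hy => ⟨j, hj.symm, hj ▸ hy⟩, fun ⟨k, hk, hy⟩ => hk ▸ hy⟩

theorem pairwise_disjoint_fiber_prod (f : X → Set Y) {e : ι → Set Y} (he : Function.Injective e) :
    Pairwise (Function.onFun Disjoint fun j => (f ⁻¹' {e j}) ×ˢ e j) := fun _ _ hjk =>
  ((disjoint_singleton.2 (he.ne hjk)).preimage f).set_prod_left _ _

end CrossSections

/-- If `C` is a clopen subset of `X × Y` that is a finite union of rectangles, then `C` is a
finite union of pairwise disjoint clopen rectangles. -/
theorem stmt1 {X Y : Type*} [TopologicalSpace X] [TopologicalSpace Y]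
    (C : Set (X × Y)) (hC : IsClopen C)
    (n : ℕ) (A : Fin n → Set X) (B : Fin n → Set Y)
    (hunion : C = ⋃ i, A i ×ˢ B i) :
    ∃ (m : ℕ) (U : Fin m → Set X) (V : Fin m → Set Y),
      (∀ j, IsClopen (U j) ∧ IsClopen (V j)) ∧
      Pairwise (Function.onFun Disjoint (fun j => U j ×ˢ V j)) ∧
      C = ⋃ j, U j ×ˢ V j := by
  subst hunion
  set τ : X → Set Y := fun x => {y | (x, y) ∈ ⋃ i, A i ×ˢ B i}
  have hτ : IsLocallyConstant τ :=
    isLocallyConstant_setOf_mem_of_finite_range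
      (fun y => hC.preimage (continuous_id.prodMk continuous_const))
      (finite_range_setOf_mem_iUnion_prod' A B)
  obtain ⟨m, e, he_inj, he_range⟩ := (finite_range_setOf_mem_iUnion_prod A B).fin_param
  refine ⟨m, fun j => τ ⁻¹' {e j}, e, fun j => ⟨hτ.isClopen_fiber (e j), ?_⟩,
    pairwise_disjoint_fiber_prod τ he_inj, setOf_mem_eq_iUnion_fiber_prod he_range.ge⟩
  obtain ⟨x, hx⟩ := he_range.le ⟨j, rfl⟩
  exact hx ▸ hC.preimage (continuous_const.prodMk continuous_id)
end

section
/- If X is an h-homogeneous space that is not connected, then X is homeomorphic to the disjoint union of n copies of X for every positive integer n. -/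
open Set

/-- `X` is h-homogeneous: all nonempty clopen subsets are homeomorphic to each other. -/
def IsHHomogeneous (X : Type*) [TopologicalSpace X] : Prop :=
  ∀ C D : Set X, IsClopen C → C.Nonempty → IsClopen D → D.Nonempty →
    Nonempty (C ≃ₜ D)

/-!
A nontrivial clopen set `C` splits `X` as `C ⊕ Cᶜ`, and by h-homogeneity both summands are
homeomorphic to `X`, so `X ≃ₜ X ⊕ X`. Splitting off one copy of `X` at a time then gives
`X ≃ₜ Fin n × X` by induction on `n`.
-/

section

variable {X : Type*} [TopologicalSpace X]

noncomputable def IsClopen.sumComplHomeomorph {C : Set X} (hC : IsClopen C) :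
    (C ⊕ (Cᶜ : Set X)) ≃ₜ X := by
  classical
  refine (Equiv.Set.sumCompl C).toHomeomorphOfContinuousOpen ?_ ?_ <;>
    rw [show ⇑(Equiv.Set.sumCompl C) = Sum.elim Subtype.val Subtype.val by ext (x | x) <;> simp]
  · exact continuous_subtype_val.sumElim continuous_subtype_val
  · exact hC.isOpen.isOpenMap_subtype_val.sumElim hC.compl.isOpen.isOpenMap_subtype_val

theorem exists_isClopen_nonempty_compl_nonempty [Nonempty X] (h : ¬ConnectedSpace X) :
    ∃ C : Set X, IsClopen C ∧ C.Nonempty ∧ Cᶜ.Nonempty := by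
  simp only [connectedSpace_iff_clopen, not_and, not_forall, not_or] at h
  obtain ⟨C, hC, hCne, hCuniv⟩ := h ‹_›
  exact ⟨C, hC, nonempty_iff_ne_empty.2 hCne, nonempty_compl.2 hCuniv⟩

theorem IsHHomogeneous.nonempty_homeomorph_of_isClopen (hX : IsHHomogeneous X) {C : Set X}
    (hC : IsClopen C) (hCne : C.Nonempty) : Nonempty (C ≃ₜ X) := by
  obtain ⟨e⟩ := hX C univ hC hCne isClopen_univ (hCne.mono (subset_univ C))
  exact ⟨e.trans (Homeomorph.Set.univ X)⟩

theorem IsHHomogeneous.nonempty_homeomorph_sum_self [Nonempty X] (hX : IsHHomogeneous X)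
    (hnc : ¬ConnectedSpace X) : Nonempty (X ≃ₜ X ⊕ X) := by
  obtain ⟨C, hC, hCne, hCcne⟩ := exists_isClopen_nonempty_compl_nonempty hnc
  obtain ⟨eC⟩ := hX.nonempty_homeomorph_of_isClopen hC hCne
  obtain ⟨eCc⟩ := hX.nonempty_homeomorph_of_isClopen hC.compl hCcne
  exact ⟨hC.sumComplHomeomorph.symm.trans (eC.sumCongr eCc)⟩

theorem nonempty_homeomorph_fin_prod_of_homeomorph_sum_self (e : X ≃ₜ X ⊕ X) {n : ℕ}
    (hn : 0 < n) : Nonempty (X ≃ₜ Fin n × X) := by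
  induction n, hn using Nat.le_induction with
  | base => exact ⟨(Homeomorph.uniqueProd (Fin 1) X).symm⟩
  | succ n _ ih =>
    obtain ⟨en⟩ := ih
    exact ⟨e.trans <| (en.sumCongr (Homeomorph.uniqueProd (Fin 1) X).symm).trans <|
      Homeomorph.sumProdDistrib.symm.trans <|
        finSumFinEquiv.toHomeomorphOfDiscrete.prodCongr (Homeomorph.refl X)⟩

end

/-- If `X` is a nonempty h-homogeneous space that is not connected, then `X` is homeomorphic
to the disjoint union of `n` copies of itself for every positive `n`. -/
theorem stmt3 {X : Type*} [TopologicalSpace X] [Nonempty X]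
    (hX : IsHHomogeneous X) (hnc : ¬ ConnectedSpace X) :
    ∀ n : ℕ, 0 < n → Nonempty (X ≃ₜ (Fin n × X)) := by
  obtain ⟨e⟩ := hX.nonempty_homeomorph_sum_self hnc
  exact fun _ hn ↦ nonempty_homeomorph_fin_prod_of_homeomorph_sum_self e hn
end

section
/- For a topological space F and a space X, the following are equivalent: (1) F is a factor of X^ω, i.e., there exists Y with F × Y homeomorphic to X^ω; (2) F × X^ω is homeomorphic to X^ω; (3) F^ω × X^ω is homeomorphic to X^ω. -/
/-!
If `F × Y ≅ X^ω`, then `X^ω ≅ (X^ω)^ω ≅ F^ω × Y^ω`, and `F^ω` absorbs both `F` and `F^ω` as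
product factors (`F × F^ω ≅ F^ω ≅ F^ω × F^ω`). Any space absorbed by a factor of `X^ω` is absorbed
by `X^ω` itself, which gives (1) → (3) → (2); and (2) → (1) is trivial with `Y = X^ω`.
-/

namespace Homeomorph

variable {ι A B C Z : Type*} [TopologicalSpace A] [TopologicalSpace B] [TopologicalSpace C]
  [TopologicalSpace Z]

def arrowProdHomeomorphProdArrow : (ι → A × B) ≃ₜ (ι → A) × (ι → B) where
  toEquiv := Equiv.arrowProdEquivProdArrow ι (fun _ => A) (fun _ => B)
  continuous_toFun := by fun_prop
  continuous_invFun := by fun_prop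

def prodNatArrow : A × (ℕ → A) ≃ₜ (ℕ → A) :=
  (prodComm A (ℕ → A)).trans <|
    ((Homeomorph.refl (ℕ → A)).prodCongr (funUnique Unit A).symm).trans <|
      sumArrowHomeomorphProdArrow.symm.trans
        (piCongrLeft (Y := fun _ => A) Equiv.natSumPUnitEquivNat)

def natArrowProdSelf : (ℕ → A) × (ℕ → A) ≃ₜ (ℕ → A) :=
  sumArrowHomeomorphProdArrow.symm.trans (piCongrLeft (Y := fun _ => A) Equiv.natSumNatEquivNat)

def natArrowNatArrow : (ℕ → ℕ → A) ≃ₜ (ℕ → A) :=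
  piCurry.symm.trans (piCongrLeft (Y := fun _ => A) Nat.pairEquiv)

def prodAbsorb (e : Z ≃ₜ A × B) (h : C × A ≃ₜ A) : C × Z ≃ₜ Z :=
  ((Homeomorph.refl C).prodCongr e).trans <|
    (prodAssoc C A B).symm.trans <| (h.prodCongr (Homeomorph.refl B)).trans e.symm

end Homeomorph

open Homeomorph

/-- For spaces `F` and `X`, the following are equivalent: `F` is a factor of `X^ω`;
`F × X^ω ≅ X^ω`; `F^ω × X^ω ≅ X^ω`. -/
theorem stmt6 (F X : Type) [TopologicalSpace F] [TopologicalSpace X] :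
    List.TFAE
      [∃ (Y : Type) (_ : TopologicalSpace Y), Nonempty ((F × Y) ≃ₜ (ℕ → X)),
       Nonempty ((F × (ℕ → X)) ≃ₜ (ℕ → X)),
       Nonempty (((ℕ → F) × (ℕ → X)) ≃ₜ (ℕ → X))] := by
  tfae_have 1 → 3 := by
    rintro ⟨Y, _, ⟨e⟩⟩
    have hX : (ℕ → X) ≃ₜ (ℕ → F) × (ℕ → Y) :=
      natArrowNatArrow.symm.trans <|
        (piCongrRight fun _ => e.symm).trans arrowProdHomeomorphProdArrow
    exact ⟨prodAbsorb hX natArrowProdSelf⟩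
  tfae_have 3 → 2 := fun ⟨e⟩ => ⟨prodAbsorb e.symm prodNatArrow⟩
  tfae_have 2 → 1 := fun h => ⟨ℕ → X, inferInstance, h⟩
  tfae_finish
end

section
/- If X is a zero-dimensional space whose isolated points are dense, then X^ω is h-homogeneous. -/
open Set

/-- `X` is zero-dimensional: it has a base of clopen sets. -/
def ZeroDimensional (X : Type*) [TopologicalSpace X] : Prop :=
  ∀ (x : X) (U : Set X), IsOpen U → x ∈ U → ∃ V : Set X, IsClopen V ∧ x ∈ V ∧ V ⊆ U

/-!
Isolated points of a zero-dimensional space have clopen singletons. Let `Y = ℕ → X` and fix two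
distinct such points `d ≠ e`. A nonempty clopen `C ⊆ Y` contains a cylinder `V` with prefix in
such points (they are dense), and `V ≃ₜ Y`, so `C ≃ₜ Y ⊕ E` with `E = C \ V` clopen. It remains
to absorb `E` in Hilbert-hotel fashion: the clopen "rooms" `dⁿ e E` are pairwise disjoint, and
prepending `d` on their union (identity elsewhere) is a homeomorphism of `Y` onto the complement
of the room `e E ≃ₜ E`. Continuity holds because the `k`-th coordinate of this map only depends
on membership in the first `k + 1` rooms.
-/

open Function Topology

noncomputable def Topology.IsEmbedding.sumHomeomorphOfIsCompl {A B Z : Type*}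
    [TopologicalSpace A] [TopologicalSpace B] [TopologicalSpace Z] {f : A → Z} {g : B → Z}
    (hf : IsEmbedding f) (hg : IsEmbedding g) (hfc : IsClosed (range f))
    (hgc : IsClosed (range g)) (hfg : IsCompl (range f) (range g)) : A ⊕ B ≃ₜ Z :=
  (hf.sumElim hg (by rw [hfc.closure_eq]; exact hfg.disjoint)
    (by rw [hgc.closure_eq]; exact hfg.disjoint)).toHomeomorphOfSurjective <| by
      rw [← range_eq_univ, Sum.elim_range]
      exact hfg.sup_eq_top

noncomputable def homeomorphSumDiffOfIsClopen {α : Type*} [TopologicalSpace α] {s t : Set α}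
    (ht : IsClopen t) (hts : t ⊆ s) : t ⊕ (s \ t : Set α) ≃ₜ s :=
  have hcompl : range (inclusion (sdiff_subset : s \ t ⊆ s)) = (range (inclusion hts))ᶜ := by
    ext x
    simp
  have ht' : IsClopen (range (inclusion hts)) := by
    rw [range_inclusion]
    exact ht.preimage continuous_subtype_val
  IsEmbedding.sumHomeomorphOfIsCompl (.inclusion hts) (.inclusion sdiff_subset) ht'.isClosed
    (hcompl ▸ ht'.compl.isClosed) (hcompl ▸ isCompl_compl)

theorem continuous_piecewise_iUnion {α : Type*} [TopologicalSpace α] {Y : ℕ → Type*}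
    [∀ k, TopologicalSpace (Y k)] {S : ℕ → Set α} [DecidablePred (· ∈ ⋃ n, S n)]
    (hS : ∀ n, IsClopen (S n)) {f g : α → ∀ k, Y k} (hf : Continuous f) (hg : Continuous g)
    (hfg : ∀ n, ∀ x ∈ S n, ∀ k < n, f x k = g x k) :
    Continuous ((⋃ n, S n).piecewise f g) := by
  classical
  refine continuous_pi fun k => ?_
  have hT : IsClopen (⋃ n ∈ Iic k, S n) := (finite_Iic k).isClopen_biUnion fun n _ => hS n
  have hcoord : (fun x => (⋃ n, S n).piecewise f g x k) =
      (⋃ n ∈ Iic k, S n).piecewise (f · k) (g · k) := by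
    ext x
    by_cases hxT : x ∈ ⋃ n ∈ Iic k, S n
    · have hx : x ∈ ⋃ n, S n := by
        obtain ⟨n, -, hxn⟩ := mem_iUnion₂.mp hxT
        exact mem_iUnion_of_mem n hxn
      simp only [piecewise_eq_of_mem _ _ _ hx, piecewise_eq_of_mem _ _ _ hxT]
    · rw [piecewise_eq_of_notMem _ _ _ hxT]
      by_cases hx : x ∈ ⋃ n, S n
      · obtain ⟨n, hxn⟩ := mem_iUnion.mp hx
        have hkn : k < n := lt_of_not_ge fun hnk => hxT (mem_biUnion hnk hxn)
        rw [piecewise_eq_of_mem _ _ _ hx, hfg n x hxn k hkn]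
      · rw [piecewise_eq_of_notMem _ _ _ hx]
  rw [hcoord]
  exact ((continuous_apply k).comp hf).piecewise (by rw [hT.frontier_eq]; simp)
    ((continuous_apply k).comp hg)

namespace NatSeq

variable {X : Type*}

def cons (a : X) (z : ℕ → X) : ℕ → X
  | 0 => a
  | n + 1 => z n

def tail (z : ℕ → X) : ℕ → X := fun n => z (n + 1)

@[simp] theorem cons_zero (a : X) (z : ℕ → X) : cons a z 0 = a := rfl

@[simp] theorem tail_cons (a : X) (z : ℕ → X) : tail (cons a z) = z := rfl

theorem cons_head_tail (z : ℕ → X) : cons (z 0) (tail z) = z := by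
  funext n
  cases n <;> rfl

def prepend (s : ℕ → X) (n : ℕ) (z : ℕ → X) : ℕ → X := fun k => if k < n then s k else z (k - n)

def drop (n : ℕ) (z : ℕ → X) : ℕ → X := fun k => z (k + n)

theorem drop_prepend (s : ℕ → X) (n : ℕ) : LeftInverse (drop n) (prepend s n) := by
  intro z
  funext k
  simp [drop, prepend]

theorem range_prepend (s : ℕ → X) (n : ℕ) : range (prepend s n) = PiNat.cylinder s n := by
  refine Subset.antisymm ?_ fun z hz => ⟨drop n z, ?_⟩
  · rintro _ ⟨z, rfl⟩ i hi
    simp [prepend, hi]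
  · funext k
    by_cases hk : k < n
    · simp [prepend, hk, hz k hk]
    · simp [prepend, drop, hk, Nat.sub_add_cancel (not_lt.mp hk)]

def room (d e : X) (E : Set (ℕ → X)) : ℕ → Set (ℕ → X)
  | 0 => cons e '' E
  | n + 1 => cons d '' room d e E n

section Hotel

variable {d e : X} {E : Set (ℕ → X)}

theorem apply_eq_of_mem_room {n : ℕ} {z : ℕ → X} (hz : z ∈ room d e E n) {i : ℕ}
    (hi : i < n) : z i = d := by
  induction n generalizing z i with
  | zero => exact absurd hi (Nat.not_lt_zero i)
  | succ n ih =>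
    obtain ⟨y, hy, rfl⟩ := hz
    cases i with
    | zero => rfl
    | succ i => exact ih hy (Nat.lt_of_succ_lt_succ hi)

theorem cons_mem_room_succ {n : ℕ} {z : ℕ → X} (hz : z ∈ room d e E n) :
    cons d z ∈ room d e E (n + 1) :=
  mem_image_of_mem _ hz

theorem notMem_room_zero_of_mem_room_succ (hde : d ≠ e) {n : ℕ} {z : ℕ → X}
    (hz : z ∈ room d e E (n + 1)) : z ∉ room d e E 0 := by
  rintro ⟨y, -, rfl⟩
  obtain ⟨y', -, hy'⟩ := hz
  exact hde (by simpa using congrFun hy' 0)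

open Classical in
noncomputable def hotelShift (d e : X) (E : Set (ℕ → X)) : (ℕ → X) → ℕ → X :=
  (⋃ n, room d e E n).piecewise (cons d) id

open Classical in
noncomputable def hotelUnshift (d e : X) (E : Set (ℕ → X)) : (ℕ → X) → ℕ → X :=
  (⋃ n, room d e E (n + 1)).piecewise tail id

theorem hotelUnshift_hotelShift : LeftInverse (hotelUnshift d e E) (hotelShift d e E) := by
  intro z
  by_cases hz : z ∈ ⋃ n, room d e E n
  · obtain ⟨n, hzn⟩ := mem_iUnion.mp hz
    have hshift : cons d z ∈ ⋃ n, room d e E (n + 1) :=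
      mem_iUnion_of_mem n (cons_mem_room_succ hzn)
    simp [hotelShift, hotelUnshift, hz, hshift]
  · have hunshift : z ∉ ⋃ n, room d e E (n + 1) := fun h => hz <| by
      obtain ⟨n, hzn⟩ := mem_iUnion.mp h
      exact mem_iUnion_of_mem _ hzn
    simp [hotelShift, hotelUnshift, hz, hunshift]

theorem range_hotelShift (hde : d ≠ e) : range (hotelShift d e E) = (room d e E 0)ᶜ := by
  refine Subset.antisymm ?_ fun z hz => ?_
  · rintro _ ⟨z, rfl⟩
    by_cases hzr : z ∈ ⋃ n, room d e E n
    · obtain ⟨n, hzn⟩ := mem_iUnion.mp hzr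
      simpa [hotelShift, hzr] using
        notMem_room_zero_of_mem_room_succ hde (cons_mem_room_succ hzn)
    · simpa [hotelShift, hzr] using fun h => hzr (mem_iUnion_of_mem 0 h)
  · by_cases hzr : z ∈ ⋃ n, room d e E n
    · obtain ⟨n, hzn⟩ := mem_iUnion.mp hzr
      cases n with
      | zero => exact absurd hzn hz
      | succ n =>
        obtain ⟨y, hy, rfl⟩ := hzn
        exact ⟨y, by simp [hotelShift, mem_iUnion_of_mem n hy]⟩
    · exact ⟨z, by simp [hotelShift, hzr]⟩

end Hotel

variable [TopologicalSpace X]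

theorem continuous_cons (a : X) : Continuous (cons a) :=
  continuous_pi fun n => by cases n with
    | zero => exact continuous_const
    | succ n => exact continuous_apply n

theorem continuous_tail : Continuous (tail : (ℕ → X) → ℕ → X) :=
  continuous_pi fun n => continuous_apply (n + 1)

theorem isEmbedding_cons (a : X) : IsEmbedding (cons a) :=
  LeftInverse.isEmbedding (tail_cons a) continuous_tail (continuous_cons a)

theorem isClopen_image_cons {a : X} (ha : IsClopen ({a} : Set X)) {s : Set (ℕ → X)}
    (hs : IsClopen s) : IsClopen (cons a '' s) := by
  have hcons : cons a '' s = (fun z => z 0) ⁻¹' {a} ∩ tail ⁻¹' s := by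
    ext z
    constructor
    · rintro ⟨y, hy, rfl⟩
      exact ⟨rfl, hy⟩
    · rintro ⟨rfl, hz⟩
      exact ⟨tail z, hz, cons_head_tail z⟩
  rw [hcons]
  exact (ha.preimage (continuous_apply 0)).inter (hs.preimage continuous_tail)

theorem isClopen_cylinder {s : ℕ → X} (hs : ∀ i, IsClopen ({s i} : Set X)) (n : ℕ) :
    IsClopen (PiNat.cylinder s n) := by
  rw [PiNat.cylinder_eq_pi]
  exact ⟨isClosed_set_pi fun i _ => (hs i).isClosed,
    isOpen_set_pi (Finset.finite_toSet _) fun i _ => (hs i).isOpen⟩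

noncomputable def cylinderHomeomorph (s : ℕ → X) (n : ℕ) : (ℕ → X) ≃ₜ PiNat.cylinder s n :=
  have hdrop : Continuous (drop n : (ℕ → X) → ℕ → X) :=
    continuous_pi fun k => continuous_apply (k + n)
  have hprepend : Continuous (prepend s n) := continuous_pi fun k => by
    by_cases hk : k < n
    · simpa [prepend, hk] using continuous_const
    · simpa [prepend, hk] using continuous_apply (k - n)
  ((drop_prepend s n).isEmbedding hdrop hprepend).toHomeomorph.trans
    (.setCongr (range_prepend s n))

theorem exists_cylinder_subset {D : Set X} (hD : Dense D) {U : Set (ℕ → X)} (hU : IsOpen U)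
    (hne : U.Nonempty) : ∃ (s : ℕ → X) (n : ℕ), (∀ i, s i ∈ D) ∧ PiNat.cylinder s n ⊆ U := by
  obtain ⟨g, hg⟩ := hne
  obtain ⟨I, u, hu, hIu⟩ := isOpen_pi_iff.mp hU g hg
  have hpoint : ∀ i, ∃ x ∈ D, i ∈ I → x ∈ u i := fun i => by
    by_cases hi : i ∈ I
    · obtain ⟨x, hxD, hxu⟩ := hD.exists_mem_open (hu i hi).1 ⟨g i, (hu i hi).2⟩
      exact ⟨x, hxD, fun _ => hxu⟩
    · obtain ⟨x, hxD⟩ := hD.nonempty (h := ⟨g 0⟩)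
      exact ⟨x, hxD, fun h => absurd h hi⟩
  choose s hsD hsu using hpoint
  refine ⟨s, I.sup id + 1, hsD, fun z hz => hIu fun i hi => ?_⟩
  rw [hz i (Nat.lt_succ_of_le (Finset.le_sup (f := id) hi))]
  exact hsu i hi

section Hotel

variable {d e : X} {E : Set (ℕ → X)}
variable (hd : IsClopen ({d} : Set X)) (he : IsClopen ({e} : Set X)) (hE : IsClopen E)
include hd he hE

theorem isClopen_room (n : ℕ) : IsClopen (room d e E n) := by
  induction n with
  | zero => exact isClopen_image_cons he hE
  | succ n ih => exact isClopen_image_cons hd ih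

theorem continuous_hotelShift : Continuous (hotelShift d e E) := by
  classical
  refine continuous_piecewise_iUnion (isClopen_room hd he hE) (continuous_cons d) continuous_id
    fun n z hz k hk => ?_
  cases k with
  | zero => exact (apply_eq_of_mem_room hz hk).symm
  | succ k =>
    exact (apply_eq_of_mem_room hz (by omega)).trans (apply_eq_of_mem_room hz hk).symm

theorem continuous_hotelUnshift : Continuous (hotelUnshift d e E) := by
  classical
  exact continuous_piecewise_iUnion (fun n => isClopen_room hd he hE (n + 1)) continuous_tail
    continuous_id fun n z hz k hk =>
      (apply_eq_of_mem_room hz (by omega)).trans (apply_eq_of_mem_room hz (by omega)).symm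

noncomputable def sumClopenHomeomorph (hde : d ≠ e) : (ℕ → X) ⊕ E ≃ₜ (ℕ → X) :=
  have hrange : range (cons e ∘ ((↑) : E → ℕ → X)) = room d e E 0 := by
    rw [range_comp, Subtype.range_coe]
    rfl
  have hroom := isClopen_room hd he hE 0
  IsEmbedding.sumHomeomorphOfIsCompl
    (hotelUnshift_hotelShift.isEmbedding (continuous_hotelUnshift hd he hE)
      (continuous_hotelShift hd he hE))
    ((isEmbedding_cons e).comp .subtypeVal)
    (range_hotelShift hde ▸ hroom.compl.isClosed) (hrange ▸ hroom.isClosed)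
    (by rw [range_hotelShift hde, hrange]; exact isCompl_compl.symm)

end Hotel

theorem exists_ne_of_dense_isClopen_singleton [Nontrivial X]
    (hD : Dense {x : X | IsClopen ({x} : Set X)}) :
    ∃ d e : X, IsClopen ({d} : Set X) ∧ IsClopen ({e} : Set X) ∧ d ≠ e := by
  obtain ⟨d, hd⟩ := hD.nonempty
  obtain ⟨y, hy⟩ := exists_ne d
  obtain ⟨e, he, hed⟩ := hD.exists_mem_open hd.isClosed.isOpen_compl ⟨y, hy⟩
  exact ⟨d, e, hd, he, Ne.symm hed⟩

theorem nonempty_homeomorph_of_isClopen (hD : Dense {x : X | IsClopen ({x} : Set X)})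
    {C : Set (ℕ → X)} (hC : IsClopen C) (hne : C.Nonempty) : Nonempty (C ≃ₜ (ℕ → X)) := by
  rcases subsingleton_or_nontrivial X with hX | hX
  · exact ⟨(Homeomorph.setCongr hne.eq_univ).trans (Homeomorph.Set.univ _)⟩
  obtain ⟨d, e, hd, he, hde⟩ := exists_ne_of_dense_isClopen_singleton hD
  obtain ⟨s, n, hs, hsC⟩ := exists_cylinder_subset hD hC.isOpen hne
  have hV := isClopen_cylinder hs n
  exact ⟨(homeomorphSumDiffOfIsClopen hV hsC).symm.trans <|
    ((cylinderHomeomorph s n).symm.sumCongr (.refl _)).trans <|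
      sumClopenHomeomorph hd he (hC.diff hV) hde⟩

end NatSeq

theorem ZeroDimensional.isClopen_singleton {X : Type*} [TopologicalSpace X]
    (hzd : ZeroDimensional X) {x : X} (hx : IsOpen ({x} : Set X)) : IsClopen ({x} : Set X) := by
  obtain ⟨V, hV, hxV, hVx⟩ := hzd x {x} hx rfl
  rwa [← (subset_singleton_iff_eq.mp hVx).resolve_left (nonempty_of_mem hxV).ne_empty]

/-- If `X` is zero-dimensional and its isolated points are dense, then `X^ω` is
h-homogeneous. -/
theorem stmt13 {X : Type*} [TopologicalSpace X] (hzd : ZeroDimensional X)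
    (hdense : Dense {x : X | IsOpen ({x} : Set X)}) :
    IsHHomogeneous (ℕ → X) := by
  have hD : Dense {x : X | IsClopen ({x} : Set X)} :=
    hdense.mono fun _ hx => hzd.isClopen_singleton hx
  intro C D hC hCne hD' hDne
  obtain ⟨φ⟩ := NatSeq.nonempty_homeomorph_of_isClopen hD hC hCne
  obtain ⟨ψ⟩ := NatSeq.nonempty_homeomorph_of_isClopen hD hD' hDne
  exact ⟨φ.trans ψ.symm⟩
end
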